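/- Let d be a positive integer, β*, β ∈ ℝ^d, and t > 0 with s := √(2t)·‖β*‖₂ ≥ 10. Define p := (1/2)(√(1 + 2t‖β* + β‖₂²) + √(1 + 2t‖β* − β‖₂²)) and q := (1/2)(√(1 + 2t‖β* + β‖₂²) − √(1 + 2t‖β* − β‖₂²)). Then for every integer k ≥ 2, p^k − q^k ≥ (s/3)^{k−1}. -/
import Mathlib

set_option maxHeartbeats 800000


/-- Squared Euclidean norm on `ℝ^d`. -/
def sq2 {m : ℕ} (v : Fin m → ℝ) : ℝ := ∑ i, v i ^ 2

lemma sq2_nonneg {m : ℕ} (v : Fin m → ℝ) : 0 ≤ sq2 v :=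
  Finset.sum_nonneg fun i _ => sq_nonneg _

lemma sq2_parallelogram {m : ℕ} (u v : Fin m → ℝ) :
    sq2 (u + v) + sq2 (u - v) = 2 * sq2 u + 2 * sq2 v := by
  unfold sq2
  rw [← Finset.sum_add_distrib, Finset.mul_sum, Finset.mul_sum, ← Finset.sum_add_distrib]
  apply Finset.sum_congr rfl
  intro i _
  simp only [Pi.add_apply, Pi.sub_apply]
  ring

/-- With `s = √(2t)‖β*‖₂ ≥ 10` and `p, q` as in the MGF formula,
for every integer `k ≥ 2` one has `p^k − q^k ≥ (s/3)^{k−1}`. -/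
theorem stmt11 (d : ℕ) (hd : 0 < d) (βstar β : Fin d → ℝ) (t : ℝ) (ht : 0 < t)
    (s : ℝ) (hsdef : s = Real.sqrt (2 * t) * Real.sqrt (sq2 βstar)) (hs : 10 ≤ s)
    (p q : ℝ)
    (hp : p = (1 / 2) * (Real.sqrt (1 + 2 * t * sq2 (βstar + β))
      + Real.sqrt (1 + 2 * t * sq2 (βstar - β))))
    (hq : q = (1 / 2) * (Real.sqrt (1 + 2 * t * sq2 (βstar + β))
      - Real.sqrt (1 + 2 * t * sq2 (βstar - β))))
    (k : ℕ) (hk : 2 ≤ k) :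
    (s / 3) ^ (k - 1) ≤ p ^ k - q ^ k := by
  set A := sq2 (βstar + β) with hA
  set B := sq2 (βstar - β) with hB
  have hA0 : 0 ≤ A := sq2_nonneg _
  have hB0 : 0 ≤ B := sq2_nonneg _
  set a := Real.sqrt (1 + 2 * t * A) with ha
  set b := Real.sqrt (1 + 2 * t * B) with hb
  have ha1 : 1 ≤ a := by
    have h := Real.sqrt_le_sqrt (show (1:ℝ) ≤ 1 + 2 * t * A by nlinarith)
    rwa [Real.sqrt_one] at h
  have hb1 : 1 ≤ b := by
    have h := Real.sqrt_le_sqrt (show (1:ℝ) ≤ 1 + 2 * t * B by nlinarith)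
    rwa [Real.sqrt_one] at h
  have ha2 : a ^ 2 = 1 + 2 * t * A := Real.sq_sqrt (by nlinarith)
  have hb2 : b ^ 2 = 1 + 2 * t * B := Real.sq_sqrt (by nlinarith)
  have hs2 : s ^ 2 = 2 * t * sq2 βstar := by
    rw [hsdef, mul_pow, Real.sq_sqrt (by linarith), Real.sq_sqrt (sq2_nonneg _)]
  have hpar : A + B = 2 * sq2 βstar + 2 * sq2 β := sq2_parallelogram _ _
  have hβ0 : 0 ≤ sq2 β := sq2_nonneg _
  -- key: a² + b² ≥ 2 + 2 s²
  have hsum : 2 + 2 * s ^ 2 ≤ a ^ 2 + b ^ 2 := by nlinarith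
  -- p ≥ s/3
  have hs30 : 0 ≤ s / 3 := by linarith
  have hp0 : 0 ≤ p := by rw [hp]; positivity
  have hpsq : (s / 3) ^ 2 ≤ p ^ 2 := by nlinarith
  have hsp : s / 3 ≤ p := by nlinarith
  -- |q| ≤ p - 1
  have hqle : |q| ≤ p - 1 := by
    rw [abs_le, hp, hq]
    constructor <;> nlinarith
  have hqp : |q| ≤ p := by linarith
  -- conclude
  obtain ⟨m, rfl⟩ : ∃ m, k = m + 1 := ⟨k - 1, (Nat.succ_pred_eq_of_pos (by omega)).symm⟩
  simp only [Nat.add_sub_cancel]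
  have hqk : q ^ (m + 1) ≤ |q| * p ^ m := by
    calc q ^ (m + 1) ≤ |q ^ (m + 1)| := le_abs_self _
      _ = |q| * |q| ^ m := by rw [abs_pow, pow_succ, mul_comm]
      _ ≤ |q| * p ^ m := by
          exact mul_le_mul_of_nonneg_left (pow_le_pow_left₀ (abs_nonneg q) hqp m) (abs_nonneg q)
  have hpm0 : 0 ≤ p ^ m := pow_nonneg hp0 m
  have hfin : p ^ m ≤ p ^ (m + 1) - |q| * p ^ m := by
    have : p ^ (m + 1) = p * p ^ m := by rw [pow_succ, mul_comm]
    nlinarith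
  calc (s / 3) ^ m ≤ p ^ m := pow_le_pow_left₀ hs30 hsp m
    _ ≤ p ^ (m + 1) - |q| * p ^ m := hfin
    _ ≤ p ^ (m + 1) - q ^ (m + 1) := by linarith
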